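/- arXiv:1911.13179 — 7 statements merged into one kernel-verified Lean document; each statement's English description precedes it below -/
import Mathlib

section
/- Let f and g be convex functions on R^n with resolvents R_f = (λ∂f + I)^{-1} and R_g = (λ∂g + I)^{-1} for some λ > 0, and Cayley operators C_f = 2R_f − I, C_g = 2R_g − I. Then y is a fixed point of R_{f+g} (equivalently 0 ∈ ∂f(y) + ∂g(y)) if and only if there exists z with C_f(C_g(z)) = z and y = R_g(z). -/
/-!
Every `z` with `R_g z = y` has the form `z = y + λ v` with `v ∈ ∂g(y)`, and then
`C_g z = y - λ v`. Hence `C_f (C_g z) = z` says exactly `R_f (y - λ v) = y`, i.e. `-v ∈ ∂f(y)`.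
-/

open scoped RealInnerProductSpace

section Resolvent

variable {E : Type*} [NormedAddCommGroup E] [InnerProductSpace ℝ E]

def IsSubgradientAt (f : E → ℝ) (y v : E) : Prop :=
  ∀ z, f z ≥ f y + ⟪v, z - y⟫

variable {f : E → ℝ} {R : E → E} {lam : ℝ}

theorem isSubgradientAt_resolvent
    (hR : ∀ z w, R z = w ↔ IsSubgradientAt f w (lam⁻¹ • (z - w))) (z : E) :
    IsSubgradientAt f (R z) (lam⁻¹ • (z - R z)) :=
  (hR z (R z)).1 rfl

theorem resolvent_add_smul_eq_iff (hlam : lam ≠ 0)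
    (hR : ∀ z w, R z = w ↔ IsSubgradientAt f w (lam⁻¹ • (z - w))) (y v : E) :
    R (y + lam • v) = y ↔ IsSubgradientAt f y v := by
  rw [hR, add_sub_cancel_left, smul_smul, inv_mul_cancel₀ hlam, one_smul]

end Resolvent

section Cayley

variable {E : Type*} [AddCommGroup E] [Module ℝ E]

def cayley (R : E → E) (z : E) : E :=
  (2 : ℝ) • R z - z

theorem cayley_cayley_eq_self_iff (F G : E → E) (z : E) :
    cayley F (cayley G z) = z ↔ F (cayley G z) = G z := by
  have key : cayley F (cayley G z) - z = (2 : ℝ) • (F (cayley G z) - G z) := by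
    unfold cayley; module
  rw [← sub_eq_zero, key, smul_eq_zero, sub_eq_zero]
  norm_num

end Cayley

theorem douglas_rachford_fixed_point_correspondence_general {n : ℕ}
    (f g : EuclideanSpace ℝ (Fin n) → ℝ) (lam : ℝ) (hlam : 0 < lam)
    (Rf Rg : EuclideanSpace ℝ (Fin n) → EuclideanSpace ℝ (Fin n))
    (hRf : ∀ z w, Rf z = w ↔ ∀ u, f u ≥ f w + ⟪lam⁻¹ • (z - w), u - w⟫)
    (hRg : ∀ z w, Rg z = w ↔ ∀ u, g u ≥ g w + ⟪lam⁻¹ • (z - w), u - w⟫)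
    (y : EuclideanSpace ℝ (Fin n)) :
    (∃ u v, (∀ z, f z ≥ f y + ⟪u, z - y⟫) ∧ (∀ z, g z ≥ g y + ⟪v, z - y⟫) ∧ u + v = 0)
      ↔ ∃ z, (2 : ℝ) • Rf ((2 : ℝ) • Rg z - z) - ((2 : ℝ) • Rg z - z) = z ∧ y = Rg z := by
  change (∃ u v, IsSubgradientAt f y u ∧ IsSubgradientAt g y v ∧ u + v = 0)
    ↔ ∃ z, cayley Rf (cayley Rg z) = z ∧ y = Rg z
  simp_rw [cayley_cayley_eq_self_iff]
  constructor
  · rintro ⟨u, v, hu, hv, huv⟩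
    obtain rfl : u = -v := eq_neg_of_add_eq_zero_left huv
    have hgz : Rg (y + lam • v) = y := (resolvent_add_smul_eq_iff hlam.ne' hRg y v).2 hv
    have hcz : cayley Rg (y + lam • v) = y + lam • -v := by
      rw [cayley, hgz]; module
    refine ⟨y + lam • v, ?_, hgz.symm⟩
    rw [hcz, hgz, resolvent_add_smul_eq_iff hlam.ne' hRf]
    exact hu
  · rintro ⟨z, hz, rfl⟩
    have hu := isSubgradientAt_resolvent hRf (cayley Rg z)
    rw [hz] at hu
    refine ⟨_, _, hu, isSubgradientAt_resolvent hRg z, ?_⟩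
    rw [cayley]; module

/-- Resolvent/Cayley correspondence for a sum of two convex functions:
`y` is a fixed point of the resolvent of `f+g` (equivalently `0 ∈ ∂f(y) + ∂g(y)`)
iff `y = R_g z` for some fixed point `z` of `C_f ∘ C_g`. -/
theorem douglas_rachford_fixed_point_correspondence {n : ℕ}
    (f g : EuclideanSpace ℝ (Fin n) → ℝ) (lam : ℝ) (hlam : 0 < lam)
    (hf : ConvexOn ℝ Set.univ f) (hg : ConvexOn ℝ Set.univ g)
    (Rf Rg : EuclideanSpace ℝ (Fin n) → EuclideanSpace ℝ (Fin n))
    (hRf : ∀ z w, Rf z = w ↔ ∀ u, f u ≥ f w + ⟪lam⁻¹ • (z - w), u - w⟫)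
    (hRg : ∀ z w, Rg z = w ↔ ∀ u, g u ≥ g w + ⟪lam⁻¹ • (z - w), u - w⟫)
    (y : EuclideanSpace ℝ (Fin n)) :
    (∃ u v, (∀ z, f z ≥ f y + ⟪u, z - y⟫) ∧ (∀ z, g z ≥ g y + ⟪v, z - y⟫) ∧ u + v = 0)
      ↔ ∃ z, (2 : ℝ) • Rf ((2 : ℝ) • Rg z - z) - ((2 : ℝ) • Rg z - z) = z ∧ y = Rg z :=
  douglas_rachford_fixed_point_correspondence_general f g lam hlam Rf Rg hRf hRg y
end

section
/- Let P_A be the orthogonal projection onto a linear subspace A of R^m and P_B any map on R^m. For any β ≠ 0, y is a fixed point of the RRR iteration y ↦ y + β(P_A(2P_B(y) − y) − P_B(y)) if and only if P_A(y) = P_B(y). -/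
open scoped RealInnerProductSpace

/-- Either side puts `b` in the range of `P`, where the idempotent `P` acts as the identity. -/
theorem LinearMap.apply_two_smul_sub_eq_iff_of_idempotent {R M : Type*} [Ring R] [AddCommGroup M]
    [Module R M] (P : M →ₗ[R] M) (hP : ∀ x, P (P x) = P x) (b y : M) :
    P ((2 : R) • b - y) = b ↔ P y = b := by
  have fixed_of_mem_range {x : M} (hx : P x = b) : P b = b := by rw [← hx, hP]
  constructor
  · intro h
    have hb := fixed_of_mem_range h
    rw [map_sub, map_smul, hb, two_smul, add_sub_assoc, add_eq_left,
      sub_eq_zero] at h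
    exact h.symm
  · intro h
    rw [map_sub, map_smul, fixed_of_mem_range h, h, two_smul, add_sub_cancel_right]

theorem rrr_fixed_point_iff_solution_general {m : ℕ} (β : ℝ) (hβ : β ≠ 0)
    (PA : EuclideanSpace ℝ (Fin m) →ₗ[ℝ] EuclideanSpace ℝ (Fin m))
    (hidem : ∀ x, PA (PA x) = PA x)
    (PB : EuclideanSpace ℝ (Fin m) → EuclideanSpace ℝ (Fin m))
    (y : EuclideanSpace ℝ (Fin m)) :
    y + β • (PA ((2 : ℝ) • PB y - y) - PB y) = y ↔ PA y = PB y := by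
  rw [add_eq_left, smul_eq_zero, or_iff_right hβ, sub_eq_zero,
    PA.apply_two_smul_sub_eq_iff_of_idempotent hidem]

/-- For any `β ≠ 0`, `y` is a fixed point of the RRR iteration iff `P_A y = P_B y`. -/
theorem rrr_fixed_point_iff_solution {m : ℕ} (β : ℝ) (hβ : β ≠ 0)
    (PA : EuclideanSpace ℝ (Fin m) →ₗ[ℝ] EuclideanSpace ℝ (Fin m))
    (hidem : ∀ x, PA (PA x) = PA x)
    (hsa : ∀ x z, ⟪PA x, z⟫ = ⟪x, PA z⟫)
    (PB : EuclideanSpace ℝ (Fin m) → EuclideanSpace ℝ (Fin m))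
    (y : EuclideanSpace ℝ (Fin m)) :
    y + β • (PA ((2 : ℝ) • PB y - y) - PB y) = y ↔ PA y = PB y :=
  rrr_fixed_point_iff_solution_general β hβ PA hidem PB y
end

section
/- Let y_0 ∈ R^m correspond to a solution (P_A(y_0) = P_B(y_0)) with d = min_i |y_0[i]| > 0. On the open ball {y : ‖y − y_0‖₂ < d}, the function f_R(y) = ‖y − P_A P_B(y)‖² − ½(‖y − P_A(y)‖² + ‖y − P_B(y)‖²) simplifies to ½(‖y − P_A(y_0)‖² − ‖(I − P_A)y‖²), which is a convex function of y with gradient ∇f_R(y) = P_A(y − y_0). -/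
open scoped RealInnerProductSpace
open Metric Set

/-!
On the ball of radius `min_i |y0 i|` around `y0` no coordinate changes sign, so `P_B` is
constant there, equal to `P_B y0 = P_A y0`. Substituting this into `f_R` and using that `P_A`
is a self-adjoint idempotent, the local form equals `½‖P_A (y - y0)‖²`, a convex quadratic
whose gradient is `P_A* P_A (y - y0) = P_A (y - y0)`.
-/

theorem Real.sign_eq_of_abs_sub_lt_abs {x a : ℝ} (h : |x - a| < |a|) :
    Real.sign x = Real.sign a := by
  rcases lt_trichotomy a 0 with ha | rfl | ha
  · rw [abs_of_neg ha] at h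
    rw [Real.sign_of_neg ha, Real.sign_of_neg (by linarith [le_abs_self (x - a)])]
  · exact absurd h (by simp)
  · rw [abs_of_pos ha] at h
    rw [Real.sign_of_pos ha, Real.sign_of_pos (by linarith [neg_abs_le (x - a)])]

theorem PiLp.sign_apply_eq_of_mem_ball {p : ENNReal} [Fact (1 ≤ p)] {ι : Type*} [Fintype ι]
    {y y0 : PiLp p fun _ : ι => ℝ} {d : ℝ} (hd : ∀ i, d ≤ |y0 i|) (hy : y ∈ ball y0 d)
    (i : ι) :
    Real.sign (y i) = Real.sign (y0 i) :=
  Real.sign_eq_of_abs_sub_lt_abs <|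
    calc |y i - y0 i| = dist (y i) (y0 i) := (Real.dist_eq _ _).symm
      _ ≤ dist y y0 := PiLp.dist_apply_le y y0 i
      _ < d := hy
      _ ≤ |y0 i| := hd i

section SymmetricIdempotent

variable {E : Type*} [NormedAddCommGroup E] [InnerProductSpace ℝ E] {P : E →ₗ[ℝ] E}

theorem LinearMap.IsSymmetric.inner_apply_apply_of_idem (hP : P.IsSymmetric)
    (hidem : ∀ x, P (P x) = P x) (u v : E) : ⟪P u, P v⟫ = ⟪u, P v⟫ := by
  rw [hP, hidem]

theorem LinearMap.IsSymmetric.norm_sub_apply_sq_sub_norm_sub_apply_self_sq (hP : P.IsSymmetric)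
    (hidem : ∀ x, P (P x) = P x) (y z : E) :
    ‖y - P z‖ ^ 2 - ‖y - P y‖ ^ 2 = ‖P (y - z)‖ ^ 2 := by
  have hyy : ⟪y, P y⟫ = ‖P y‖ ^ 2 := by
    rw [← hP.inner_apply_apply_of_idem hidem, real_inner_self_eq_norm_sq]
  rw [map_sub, norm_sub_sq_real, norm_sub_sq_real, norm_sub_sq_real, hyy,
    hP.inner_apply_apply_of_idem hidem]
  ring

theorem LinearMap.IsSymmetric.hasGradientAt_half_norm_sq_apply_sub [FiniteDimensional ℝ E]
    (hP : P.IsSymmetric) (hidem : ∀ x, P (P x) = P x) (z y : E) :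
    HasGradientAt (fun x => 1 / 2 * ‖P (x - z)‖ ^ 2) (P (y - z)) y := by
  let Pc := LinearMap.toContinuousLinearMap P
  have hderiv : HasFDerivAt (fun x => Pc (x - z)) Pc y := by
    have := Pc.hasFDerivAt.comp y ((hasFDerivAt_id y).sub_const z)
    rwa [ContinuousLinearMap.comp_id] at this
  rw [hasGradientAt_iff_hasFDerivAt]
  refine (hderiv.norm_sq.const_mul (1 / 2)).congr_fderiv ?_
  ext h
  simp only [_root_.smul_apply, ContinuousLinearMap.comp_apply, coe_innerSL_apply, nsmul_eq_mul,
    smul_eq_mul, InnerProductSpace.toDual_apply_apply, LinearMap.coe_toContinuousLinearMap', Pc]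
  rw [hP (y - z), hidem, ← hP]
  ring

end SymmetricIdempotent

theorem convexOn_univ_half_norm_sq_apply_sub {E F : Type*} [AddCommGroup E] [Module ℝ E]
    [SeminormedAddCommGroup F] [NormedSpace ℝ F] (P : E →ₗ[ℝ] F) (z : E) :
    ConvexOn ℝ univ fun x => 1 / 2 * ‖P (x - z)‖ ^ 2 := by
  have hsq : ConvexOn ℝ univ fun v : F => ‖v‖ ^ 2 :=
    convexOn_univ_norm.pow (fun v _ => norm_nonneg v) 2
  have := ((hsq.comp_linearMap P).translate_right (-z)).smul (c := 1 / 2) (by norm_num)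
  simpa only [Function.comp_def, preimage_univ, smul_eq_mul, neg_add_eq_sub] using this

theorem fR_local_form_convex_gradient_general {m : ℕ}
    (b : Fin m → ℝ)
    (PA : EuclideanSpace ℝ (Fin m) →ₗ[ℝ] EuclideanSpace ℝ (Fin m))
    (hidem : ∀ x, PA (PA x) = PA x)
    (hsa : ∀ x z, ⟪PA x, z⟫ = ⟪x, PA z⟫)
    (PB : EuclideanSpace ℝ (Fin m) → EuclideanSpace ℝ (Fin m))
    (hPB : ∀ y i, PB y i = b i * Real.sign (y i))
    (fR : EuclideanSpace ℝ (Fin m) → ℝ)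
    (hfR : ∀ y, fR y = ‖y - PA (PB y)‖ ^ 2
      - (1 / 2) * (‖y - PA y‖ ^ 2 + ‖y - PB y‖ ^ 2))
    (y0 : EuclideanSpace ℝ (Fin m)) (hsol : PA y0 = PB y0)
    (d : ℝ) (hdmin : ∀ i, d ≤ |y0 i|) :
    (∀ y ∈ Metric.ball y0 d,
        fR y = (1 / 2) * (‖y - PA y0‖ ^ 2 - ‖y - PA y‖ ^ 2)) ∧
    ConvexOn ℝ (Metric.ball y0 d) fR ∧
    (∀ y ∈ Metric.ball y0 d, HasGradientAt fR (PA (y - y0)) y) := by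
  have hP : PA.IsSymmetric := hsa
  have hPB_ball : ∀ y ∈ ball y0 d, PB y = PA y0 := fun y hy => by
    ext i
    rw [hsol, hPB, hPB, PiLp.sign_apply_eq_of_mem_ball hdmin hy]
  have hlocal : ∀ y ∈ ball y0 d, fR y = 1 / 2 * (‖y - PA y0‖ ^ 2 - ‖y - PA y‖ ^ 2) :=
    fun y hy => by
      rw [hfR, hPB_ball y hy, hidem]
      ring
  have hquad : EqOn (fun y => 1 / 2 * ‖PA (y - y0)‖ ^ 2) fR (ball y0 d) := fun y hy => by
    rw [hlocal y hy, hP.norm_sub_apply_sq_sub_norm_sub_apply_self_sq hidem]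
  refine ⟨hlocal, ?_, fun y hy => ?_⟩
  · exact ((convexOn_univ_half_norm_sq_apply_sub PA y0).subset (subset_univ _)
      (convex_ball y0 d)).congr hquad
  · exact (hP.hasGradientAt_half_norm_sq_apply_sub hidem y0 y).congr_of_eventuallyEq
      (Filter.eventuallyEq_of_mem (isOpen_ball.mem_nhds hy) hquad).symm

/-- Near a solution `y0` with nonvanishing coordinates, `f_R` simplifies to
`½(‖y − P_A y0‖² − ‖(I−P_A)y‖²)`, is convex on the ball, and has gradient
`P_A (y − y0)`. -/
theorem fR_local_form_convex_gradient {m : ℕ}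
    (b : Fin m → ℝ) (hb : ∀ i, 0 < b i)
    (PA : EuclideanSpace ℝ (Fin m) →ₗ[ℝ] EuclideanSpace ℝ (Fin m))
    (hidem : ∀ x, PA (PA x) = PA x)
    (hsa : ∀ x z, ⟪PA x, z⟫ = ⟪x, PA z⟫)
    (PB : EuclideanSpace ℝ (Fin m) → EuclideanSpace ℝ (Fin m))
    (hPB : ∀ y i, PB y i = b i * Real.sign (y i))
    (fR : EuclideanSpace ℝ (Fin m) → ℝ)
    (hfR : ∀ y, fR y = ‖y - PA (PB y)‖ ^ 2
      - (1 / 2) * (‖y - PA y‖ ^ 2 + ‖y - PB y‖ ^ 2))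
    (y0 : EuclideanSpace ℝ (Fin m)) (hsol : PA y0 = PB y0)
    (d : ℝ) (hd : 0 < d) (hdmin : ∀ i, d ≤ |y0 i|) :
    (∀ y ∈ Metric.ball y0 d,
        fR y = (1 / 2) * (‖y - PA y0‖ ^ 2 - ‖y - PA y‖ ^ 2)) ∧
    ConvexOn ℝ (Metric.ball y0 d) fR ∧
    (∀ y ∈ Metric.ball y0 d, HasGradientAt fR (PA (y - y0)) y) :=
  fR_local_form_convex_gradient_general b PA hidem hsa PB hPB fR hfR y0 hsol d hdmin
end

section
/- Let y_0 correspond to a solution with d = min_i |y_0[i]| > 0, and let β ∈ (0,2). If ‖y^{(0)} − y_0‖₂ < d, then the RRR iterates y^{(t)} = y^{(t-1)} − β P_A(y^{(t-1)} − y_0) satisfy ‖y^{(t)} − y_0‖₂² = (1−β)^{2t} ‖P_A(y^{(0)} − y_0)‖² + ‖(I−P_A)(y^{(0)} − y_0)‖², remain in the ball of radius d, and converge linearly to y_∞ = P_A(y_0) + (I − P_A)(y^{(0)}), which is a fixed point of RRR. If β = 1 the limit is reached in one iteration. -/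
/-!
Near `y0` the RRR step is the relaxed projection step `x ↦ x − β P x` on the error `x = y − y0`.
Since `P` is idempotent, the component `P x` is multiplied by `1 − β` at each step while
`x − P x` is left unchanged, so `x_t = (1 − β)^t P x_0 + (x_0 − P x_0)`. As `P` is moreover
symmetric the two components are orthogonal, which gives the error formula by Pythagoras,
the monotone decrease of the error (hence the iterates stay in the ball), and linear convergence
to `y0 + (x_0 − P x_0)` for `|1 − β| < 1`.
-/

open scoped RealInnerProductSpace
open Filter Topology

section RelaxedProjection

variable {R M : Type*} [CommRing R] [AddCommGroup M] [Module R M]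

theorem relaxedProjection_iterate_eq {P : M →ₗ[R] M} (hP : IsIdempotentElem P) {β : R}
    {x : ℕ → M} (hx : ∀ t, x (t + 1) = x t - β • P (x t)) (t : ℕ) :
    x t = (1 - β) ^ t • P (x 0) + (x 0 - P (x 0)) := by
  have hPP : ∀ v, P (P v) = P v := LinearMap.congr_fun hP
  induction t with
  | zero => simp
  | succ t ih =>
    rw [hx t, ih, map_add, map_smul, map_sub, hPP, sub_self, add_zero, pow_succ]
    module

end RelaxedProjection

namespace LinearMap

variable {E : Type*} [NormedAddCommGroup E] [InnerProductSpace ℝ E] {P : E →ₗ[ℝ] E}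

theorem IsSymmetric.inner_map_self_sub_map_eq_zero (hPs : P.IsSymmetric)
    (hP : IsIdempotentElem P) (x : E) : ⟪P x, x - P x⟫ = 0 := by
  rw [hPs, map_sub, show P (P x) = P x from LinearMap.congr_fun hP x, sub_self, inner_zero_right]

theorem IsSymmetric.norm_smul_map_add_sub_map_sq (hPs : P.IsSymmetric)
    (hP : IsIdempotentElem P) (a : ℝ) (x : E) :
    ‖a • P x + (x - P x)‖ ^ 2 = a ^ 2 * ‖P x‖ ^ 2 + ‖x - P x‖ ^ 2 := by
  have horth : ⟪a • P x, x - P x⟫ = 0 := by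
    rw [real_inner_smul_left, hPs.inner_map_self_sub_map_eq_zero hP, mul_zero]
  have h := norm_add_sq_eq_norm_sq_add_norm_sq_real horth
  rw [norm_smul, Real.norm_eq_abs] at h
  rw [← sq_abs a]
  linear_combination h

theorem IsSymmetric.norm_smul_map_add_sub_map_le (hPs : P.IsSymmetric)
    (hP : IsIdempotentElem P) {a : ℝ} (ha : |a| ≤ 1) (x : E) :
    ‖a • P x + (x - P x)‖ ≤ ‖x‖ := by
  have hx : ‖x‖ ^ 2 = ‖P x‖ ^ 2 + ‖x - P x‖ ^ 2 := by
    simpa using hPs.norm_smul_map_add_sub_map_sq hP 1 x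
  refine pow_le_pow_iff_left₀ (norm_nonneg _) (norm_nonneg _) two_ne_zero |>.mp ?_
  rw [hPs.norm_smul_map_add_sub_map_sq hP, hx]
  gcongr
  exact mul_le_of_le_one_left (sq_nonneg _) (sq_le_one_iff_abs_le_one a |>.mpr ha)

end LinearMap

theorem tendsto_pow_smul_add_nhds {E : Type*} [NormedAddCommGroup E] [NormedSpace ℝ E]
    {r : ℝ} (hr : |r| < 1) (u w : E) :
    Tendsto (fun t : ℕ => r ^ t • u + w) atTop (𝓝 w) := by
  simpa using ((tendsto_pow_atTop_nhds_zero_of_abs_lt_one hr).smul_const u).add_const w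

theorem rrr_local_linear_convergence_general {m : ℕ}
    (PA : EuclideanSpace ℝ (Fin m) →ₗ[ℝ] EuclideanSpace ℝ (Fin m))
    (hidem : ∀ x, PA (PA x) = PA x)
    (hsa : ∀ x z, ⟪PA x, z⟫ = ⟪x, PA z⟫)
    (y0 : EuclideanSpace ℝ (Fin m))
    (d : ℝ)
    (β : ℝ) (hβ : β ∈ Set.Ioo (0 : ℝ) 2)
    (y : ℕ → EuclideanSpace ℝ (Fin m))
    (hinit : ‖y 0 - y0‖ < d)
    (hiter : ∀ t, y (t + 1) = y t - β • PA (y t - y0)) :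
    (∀ t, ‖y t - y0‖ ^ 2
        = (1 - β) ^ (2 * t) * ‖PA (y 0 - y0)‖ ^ 2
          + ‖(y 0 - y0) - PA (y 0 - y0)‖ ^ 2) ∧
    (∀ t, ‖y t - y0‖ < d) ∧
    Filter.Tendsto y Filter.atTop (nhds (PA y0 + (y 0 - PA (y 0)))) ∧
    (PA y0 + (y 0 - PA (y 0))) - β • PA ((PA y0 + (y 0 - PA (y 0))) - y0)
      = PA y0 + (y 0 - PA (y 0)) ∧
    (β = 1 → y 1 = PA y0 + (y 0 - PA (y 0))) := by
  have hP : IsIdempotentElem PA := LinearMap.ext hidem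
  have hPs : PA.IsSymmetric := hsa
  have herr : ∀ t, y t - y0 = (1 - β) ^ t • PA (y 0 - y0) + ((y 0 - y0) - PA (y 0 - y0)) :=
    relaxedProjection_iterate_eq hP (x := fun t => y t - y0) fun t => by rw [hiter t]; abel
  have hlim : PA y0 + (y 0 - PA (y 0)) = y0 + ((y 0 - y0) - PA (y 0 - y0)) := by
    rw [map_sub]; abel
  have hcontr : |1 - β| < 1 := abs_lt.mpr ⟨by linarith [hβ.2], by linarith [hβ.1]⟩
  refine ⟨fun t => ?_, fun t => ?_, ?_, ?_, fun hβ1 => ?_⟩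
  · rw [herr t, hPs.norm_smul_map_add_sub_map_sq hP, pow_mul']
  · rw [herr t]
    refine (hPs.norm_smul_map_add_sub_map_le hP ?_ _).trans_lt hinit
    rw [abs_pow]
    exact pow_le_one₀ (abs_nonneg _) hcontr.le
  · have h := (tendsto_pow_smul_add_nhds hcontr (PA (y 0 - y0))
      ((y 0 - y0) - PA (y 0 - y0))).const_add y0
    simp_rw [← herr, add_sub_cancel] at h
    rwa [hlim]
  · have hker : PA ((y 0 - y0) - PA (y 0 - y0)) = 0 := by rw [map_sub, hidem, sub_self]
    rw [hlim, add_sub_cancel_left, hker, smul_zero, sub_zero]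
  · rw [hiter 0, hβ1, one_smul, map_sub]
    abel

/-- Local linear convergence of RRR near a solution. Within the ball of radius
`d` around `y0`, the RRR iterates `y_{t+1} = y_t − β P_A(y_t − y0)` satisfy an
explicit error formula, stay in the ball, and converge to the fixed point
`y_∞ = P_A y0 + (I − P_A) y_0`; if `β = 1` the limit is reached in one step. -/
theorem rrr_local_linear_convergence {m : ℕ}
    (PA : EuclideanSpace ℝ (Fin m) →ₗ[ℝ] EuclideanSpace ℝ (Fin m))
    (hidem : ∀ x, PA (PA x) = PA x)
    (hsa : ∀ x z, ⟪PA x, z⟫ = ⟪x, PA z⟫)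
    (y0 : EuclideanSpace ℝ (Fin m))
    (d : ℝ) (hd : 0 < d)
    (β : ℝ) (hβ : β ∈ Set.Ioo (0 : ℝ) 2)
    (y : ℕ → EuclideanSpace ℝ (Fin m))
    (hinit : ‖y 0 - y0‖ < d)
    (hiter : ∀ t, y (t + 1) = y t - β • PA (y t - y0)) :
    (∀ t, ‖y t - y0‖ ^ 2
        = (1 - β) ^ (2 * t) * ‖PA (y 0 - y0)‖ ^ 2
          + ‖(y 0 - y0) - PA (y 0 - y0)‖ ^ 2) ∧
    (∀ t, ‖y t - y0‖ < d) ∧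
    Filter.Tendsto y Filter.atTop (nhds (PA y0 + (y 0 - PA (y 0)))) ∧
    (PA y0 + (y 0 - PA (y 0))) - β • PA ((PA y0 + (y 0 - PA (y 0))) - y0)
      = PA y0 + (y 0 - PA (y 0)) ∧
    (β = 1 → y 1 = PA y0 + (y 0 - PA (y 0))) :=
  rrr_local_linear_convergence_general PA hidem hsa y0 d β hβ y hinit hiter
end

section
/- Suppose d = min_i |(Ax_0)[i]| > 0 and ‖∇f_R(y)‖₂ < ε where ε < min(ε₁, d) (ε₁ as in the gap lemma) and additionally min_i |y[i]| ≥ ε. Then y_0 := P_B(y) + (I − P_A)(y) corresponds to a solution (P_A(y_0) = P_B(y_0)) and ‖y − y_0‖₂ < ε. -/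
open scoped RealInnerProductSpace

/-!
Write `g = P_A y + P_B y - 2 P_A P_B y` for the gradient. Its orthogonal components are
`P_A g = P_A y - P_A P_B y` and `g - P_A g = P_B y - P_A P_B y`, so both are shorter than `ε`.
The second one is below the gap `ε₁`, hence `P_B y ∈ col(A)`, and then the first one is
`y - y₀ = P_A y - P_B y`. Since every coordinate of `y` is at least `ε ≥ ‖y - y₀‖` in absolute
value, `y₀` has the sign pattern of `y`, so `P_B y₀ = P_B y = P_A y₀`.
-/

theorem Real.sign_eq_of_abs_sub_lt {x z : ℝ} (h : |x - z| < |x|) :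
    Real.sign z = Real.sign x := by
  rcases lt_trichotomy x 0 with hx | rfl | hx
  · rw [abs_of_neg hx] at h
    rw [Real.sign_of_neg hx, Real.sign_of_neg (by linarith [(abs_lt.mp h).1])]
  · exact absurd h (by simp)
  · rw [abs_of_pos hx] at h
    rw [Real.sign_of_pos hx, Real.sign_of_pos (by linarith [(abs_lt.mp h).2])]

theorem PiLp.sign_apply_eq_of_norm_sub_lt {p : ENNReal} [Fact (1 ≤ p)] {ι : Type*} [Fintype ι]
    {y z : PiLp p fun _ : ι => ℝ} {i : ι} (h : ‖y - z‖ < |y i|) :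
    Real.sign (z i) = Real.sign (y i) :=
  Real.sign_eq_of_abs_sub_lt <| lt_of_le_of_lt (by simpa using PiLp.norm_apply_le (y - z) i) h

namespace LinearMap.IsSymmetricProjection

variable {𝕜 E : Type*} [RCLike 𝕜] [NormedAddCommGroup E] [InnerProductSpace 𝕜 E]
  {P : E →ₗ[𝕜] E}

theorem norm_sq_eq_norm_sq_apply_add_norm_sq_sub_apply (hP : P.IsSymmetricProjection) (x : E) :
    ‖x‖ ^ 2 = ‖P x‖ ^ 2 + ‖x - P x‖ ^ 2 := by
  obtain ⟨K, _, rfl⟩ := isSymmetricProjection_iff_eq_coe_starProjection.mp hP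
  simpa [K.starProjection_orthogonal'] using K.norm_sq_eq_add_norm_sq_starProjection x

theorem norm_apply_le (hP : P.IsSymmetricProjection) (x : E) : ‖P x‖ ≤ ‖x‖ := by
  have := hP.norm_sq_eq_norm_sq_apply_add_norm_sq_sub_apply x
  nlinarith [norm_nonneg x, norm_nonneg (P x), sq_nonneg ‖x - P x‖]

theorem norm_sub_apply_le (hP : P.IsSymmetricProjection) (x : E) : ‖x - P x‖ ≤ ‖x‖ := by
  have := hP.norm_sq_eq_norm_sq_apply_add_norm_sq_sub_apply x
  nlinarith [norm_nonneg x, norm_nonneg (x - P x), sq_nonneg ‖P x‖]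

end LinearMap.IsSymmetricProjection

section RRR

variable {𝕜 E : Type*} [RCLike 𝕜] [NormedAddCommGroup E] [InnerProductSpace 𝕜 E]
  {PA : E →ₗ[𝕜] E}

/-- The gradient `∇f_R` of the RRR objective. -/
def rrrGrad (PA : E →ₗ[𝕜] E) (PB : E → E) (y : E) : E :=
  PA y + PB y - (2 : 𝕜) • PA (PB y)

theorem apply_rrrGrad (hPA : IsIdempotentElem PA) (PB : E → E) (y : E) :
    PA (rrrGrad PA PB y) = PA y - PA (PB y) := by
  have hidem : ∀ x, PA (PA x) = PA x := fun x => congr($hPA x)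
  simp only [rrrGrad, map_sub, map_add, map_smul, hidem]
  module

theorem rrrGrad_sub_apply (hPA : IsIdempotentElem PA) (PB : E → E) (y : E) :
    rrrGrad PA PB y - PA (rrrGrad PA PB y) = PB y - PA (PB y) := by
  rw [apply_rrrGrad hPA, rrrGrad]
  module

theorem norm_apply_sub_le_norm_rrrGrad (hPA : PA.IsSymmetricProjection) (PB : E → E) (y : E) :
    ‖PA y - PA (PB y)‖ ≤ ‖rrrGrad PA PB y‖ :=
  apply_rrrGrad hPA.isIdempotentElem PB y ▸ hPA.norm_apply_le _

theorem norm_sub_apply_le_norm_rrrGrad (hPA : PA.IsSymmetricProjection) (PB : E → E) (y : E) :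
    ‖PB y - PA (PB y)‖ ≤ ‖rrrGrad PA PB y‖ :=
  rrrGrad_sub_apply hPA.isIdempotentElem PB y ▸ hPA.norm_sub_apply_le _

end RRR

theorem rrr_stability_general {m : ℕ}
    (b : Fin m → ℝ)
    (PA : EuclideanSpace ℝ (Fin m) →ₗ[ℝ] EuclideanSpace ℝ (Fin m))
    (hidem : ∀ x, PA (PA x) = PA x)
    (hsa : ∀ x z, ⟪PA x, z⟫ = ⟪x, PA z⟫)
    (PB : EuclideanSpace ℝ (Fin m) → EuclideanSpace ℝ (Fin m))
    (hPB : ∀ y i, PB y i = b i * Real.sign (y i))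
    (ε₁ : ℝ)
    (hε₁ : ∀ z : EuclideanSpace ℝ (Fin m),
      ‖PB z - PA (PB z)‖ < ε₁ → PA (PB z) = PB z)
    (ε : ℝ) (hεε₁ : ε < ε₁)
    (y : EuclideanSpace ℝ (Fin m))
    (hgrad : ‖PA y + PB y - (2 : ℝ) • PA (PB y)‖ < ε)
    (hylarge : ∀ i, ε ≤ |y i|) :
    PA (PB y + (y - PA y)) = PB (PB y + (y - PA y)) ∧
    ‖y - (PB y + (y - PA y))‖ < ε := by
  have hPA : PA.IsSymmetricProjection := ⟨LinearMap.ext hidem, hsa⟩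
  have hfix : PA (PB y) = PB y :=
    hε₁ y ((norm_sub_apply_le_norm_rrrGrad hPA PB y).trans_lt (hgrad.trans hεε₁))
  have hclose : ‖y - (PB y + (y - PA y))‖ < ε := by
    calc ‖y - (PB y + (y - PA y))‖ = ‖PA y - PA (PB y)‖ := by rw [hfix]; congr 1; abel
      _ ≤ ‖rrrGrad PA PB y‖ := norm_apply_sub_le_norm_rrrGrad hPA PB y
      _ < ε := hgrad
  have hsign : PB (PB y + (y - PA y)) = PB y := by
    ext i
    rw [hPB, hPB, PiLp.sign_apply_eq_of_norm_sub_lt (hclose.trans_le (hylarge i))]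
  refine ⟨?_, hclose⟩
  rw [hsign, map_add, map_sub, hidem, hfix, sub_self, add_zero]

/-- Stability of RRR: if the gradient is small and all coordinates of `y` are at
least `ε` in absolute value, then `y_0 = P_B y + (I − P_A) y` corresponds to a
solution and `‖y − y_0‖ < ε`. -/
theorem rrr_stability {m : ℕ}
    (b : Fin m → ℝ) (hb : ∀ i, 0 < b i)
    (PA : EuclideanSpace ℝ (Fin m) →ₗ[ℝ] EuclideanSpace ℝ (Fin m))
    (hidem : ∀ x, PA (PA x) = PA x)
    (hsa : ∀ x z, ⟪PA x, z⟫ = ⟪x, PA z⟫)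
    (PB : EuclideanSpace ℝ (Fin m) → EuclideanSpace ℝ (Fin m))
    (hPB : ∀ y i, PB y i = b i * Real.sign (y i))
    (d : ℝ) (hd : 0 < d) (hdmin : ∀ i, d ≤ b i)
    (ε₁ : ℝ) (hε₁pos : 0 < ε₁)
    (hε₁ : ∀ z : EuclideanSpace ℝ (Fin m),
      ‖PB z - PA (PB z)‖ < ε₁ → PA (PB z) = PB z)
    (ε : ℝ) (hεpos : 0 < ε) (hεε₁ : ε < ε₁) (hεd : ε < d)
    (y : EuclideanSpace ℝ (Fin m))
    (hgrad : ‖PA y + PB y - (2 : ℝ) • PA (PB y)‖ < ε)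
    (hylarge : ∀ i, ε ≤ |y i|) :
    PA (PB y + (y - PA y)) = PB (PB y + (y - PA y)) ∧
    ‖y - (PB y + (y - PA y))‖ < ε :=
  rrr_stability_general b PA hidem hsa PB hPB ε₁ hε₁ ε hεε₁ y hgrad hylarge
end

section
/- Fix y ∈ R^m and a direction d ∈ R^m with d[i] ≠ 0 for all i. If either P_A(d) ≠ 0, or (P_A(d) = 0 and ⟨d, P_B(y)⟩ > 0), then f_R(y − βd) → ∞ as β → ∞. -/
/-!
Once `β` exceeds every `|y i| / |d i|`, each coordinate of `y - β • d` has the sign of `-d i`, so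
`P_B (y - β • d) = -P_B d` is frozen and `f_R (y - β • d)` is the quadratic
`½ ‖P_A d‖² β² + (⟪d, P_B d⟫ - ⟪P_A y, P_A d⟫ - 2 ⟪d, P_A (P_B d)⟫) β + C`.
Its leading coefficient is positive when `P_A d ≠ 0`; when `P_A d = 0` the linear coefficient
reduces to `⟪d, P_B d⟫ = ∑ i, b i * |d i| > 0`.
-/

open scoped RealInnerProductSpace

open Filter

theorem Real.sign_sub_mul_of_abs_lt {a t β : ℝ} (ht : t ≠ 0) (h : |a| < β * |t|) :
    Real.sign (a - β * t) = -Real.sign t := by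
  rcases ht.lt_or_gt with ht | ht
  · rw [abs_of_neg ht] at h
    rw [Real.sign_of_pos (by linarith [neg_abs_le a]), Real.sign_of_neg ht, neg_neg]
  · rw [abs_of_pos ht] at h
    rw [Real.sign_of_neg (by linarith [le_abs_self a]), Real.sign_of_pos ht]

theorem eventually_sign_sub_mul_eq_neg_sign {ι : Type*} [Finite ι] (y d : ι → ℝ)
    (hd : ∀ i, d i ≠ 0) :
    ∀ᶠ β in atTop, ∀ i, Real.sign (y i - β * d i) = -Real.sign (d i) := by
  refine eventually_all.2 fun i => ?_
  filter_upwards [(tendsto_id.atTop_mul_const (abs_pos.2 (hd i))).eventually_gt_atTop |y i|]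
    with β hβ using Real.sign_sub_mul_of_abs_lt (hd i) hβ

theorem EuclideanSpace.inner_pos_of_apply_eq_mul_sign {ι : Type*} [Fintype ι] [Nonempty ι]
    {b : ι → ℝ} (hb : ∀ i, 0 < b i) {v w : EuclideanSpace ℝ ι} (hv : ∀ i, v i ≠ 0)
    (hw : ∀ i, w i = b i * Real.sign (v i)) : 0 < ⟪v, w⟫ := by
  rw [PiLp.inner_apply]
  refine Finset.sum_pos (fun i _ => ?_) Finset.univ_nonempty
  have := Real.sign_mul_pos_of_ne_zero _ (hv i)
  simp only [RCLike.inner_apply, conj_trivial, hw]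
  nlinarith [hb i]

theorem tendsto_quadratic_atTop {a L C : ℝ} (h : 0 < a ∨ a = 0 ∧ 0 < L) :
    Tendsto (fun β : ℝ => a * β ^ 2 + L * β + C) atTop atTop := by
  refine tendsto_atTop_add_const_right _ C ?_
  rcases h with ha | ⟨rfl, hL⟩
  · simp only [sq, ← mul_assoc, ← add_mul]
    exact ((tendsto_id.const_mul_atTop ha).atTop_add tendsto_const_nhds).atTop_mul_atTop₀
      tendsto_id
  · simpa using tendsto_id.const_mul_atTop hL

namespace LinearMap.IsSymmetricProjection

variable {E : Type*} [NormedAddCommGroup E] [InnerProductSpace ℝ E] {P : E →ₗ[ℝ] E}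

theorem norm_sub_apply_sq (hP : P.IsSymmetricProjection) (v : E) :
    ‖v - P v‖ ^ 2 = ‖v‖ ^ 2 - ‖P v‖ ^ 2 := by
  have hv : ⟪v, P v⟫ = ‖P v‖ ^ 2 := by
    rw [← real_inner_self_eq_norm_sq, hP.isSymmetric, ← Module.End.mul_apply,
      hP.isIdempotentElem.eq]
  rw [norm_sub_sq_real, hv]
  ring

/-- The objective `f_R (y - β • d)` once `P_B (y - β • d) = -c`. -/
theorem exists_eq_quadratic (hP : P.IsSymmetricProjection) (y d c : E) :
    ∃ C, ∀ β : ℝ, ‖y - β • d + P c‖ ^ 2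
        - (1 / 2) * (‖y - β • d - P (y - β • d)‖ ^ 2 + ‖y - β • d + c‖ ^ 2)
      = (1 / 2) * ‖P d‖ ^ 2 * β ^ 2 + (⟪d, c⟫ - ⟪P y, P d⟫ - 2 * ⟪d, P c⟫) * β + C := by
  refine ⟨(1 / 2) * ‖P y‖ ^ 2 + 2 * ⟪y, P c⟫ - ⟪y, c⟫ + ‖P c‖ ^ 2 - (1 / 2) * ‖c‖ ^ 2,
    fun β => ?_⟩
  have hPyd : ‖P (y - β • d)‖ ^ 2 = ‖P y‖ ^ 2 - 2 * β * ⟪P y, P d⟫ + β ^ 2 * ‖P d‖ ^ 2 := by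
    rw [map_sub, map_smul, norm_sub_sq_real, norm_smul, real_inner_smul_right, mul_pow,
      Real.norm_eq_abs, sq_abs]
    ring
  rw [norm_add_sq_real, norm_add_sq_real, hP.norm_sub_apply_sq, hPyd, inner_sub_left,
    inner_sub_left, real_inner_smul_left, real_inner_smul_left]
  ring

end LinearMap.IsSymmetricProjection

/-- Escape lemma: along any direction `d` with all coordinates nonzero such that
`P_A d ≠ 0`, or `P_A d = 0` and `⟪d, P_B y⟫ > 0`, the objective `f_R(y − βd)`
tends to infinity as `β → ∞`. -/
theorem fR_escape_lemma {m : ℕ}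
    (b : Fin m → ℝ) (hb : ∀ i, 0 < b i)
    (PA : EuclideanSpace ℝ (Fin m) →ₗ[ℝ] EuclideanSpace ℝ (Fin m))
    (hidem : ∀ x, PA (PA x) = PA x)
    (hsa : ∀ x z, ⟪PA x, z⟫ = ⟪x, PA z⟫)
    (PB : EuclideanSpace ℝ (Fin m) → EuclideanSpace ℝ (Fin m))
    (hPB : ∀ y i, PB y i = b i * Real.sign (y i))
    (fR : EuclideanSpace ℝ (Fin m) → ℝ)
    (hfR : ∀ y, fR y = ‖y - PA (PB y)‖ ^ 2
      - (1 / 2) * (‖y - PA y‖ ^ 2 + ‖y - PB y‖ ^ 2))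
    (y dir : EuclideanSpace ℝ (Fin m))
    (hdir : ∀ i, dir i ≠ 0)
    (hcond : PA dir ≠ 0 ∨ (PA dir = 0 ∧ (0 : ℝ) < ⟪dir, PB y⟫)) :
    Filter.Tendsto (fun β : ℝ => fR (y - β • dir)) Filter.atTop Filter.atTop := by
  have hP : PA.IsSymmetricProjection := ⟨LinearMap.ext hidem, hsa⟩
  obtain ⟨C, hC⟩ := hP.exists_eq_quadratic y dir (PB dir)
  have hev : ∀ᶠ β : ℝ in atTop, fR (y - β • dir)
      = (1 / 2) * ‖PA dir‖ ^ 2 * β ^ 2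
        + (⟪dir, PB dir⟫ - ⟪PA y, PA dir⟫ - 2 * ⟪dir, PA (PB dir)⟫) * β + C := by
    filter_upwards [eventually_sign_sub_mul_eq_neg_sign (fun i => y i) (fun i => dir i) hdir]
      with β hβ
    have hPB_frozen : PB (y - β • dir) = -PB dir := by
      ext i
      simp [hPB, hβ i]
    rw [hfR, hPB_frozen, map_neg, sub_neg_eq_add, sub_neg_eq_add, hC]
  refine (tendsto_quadratic_atTop ?_).congr' (hev.mono fun _ h => h.symm)
  rcases hcond with hne | ⟨hzero, hpos⟩
  · exact Or.inl (by positivity)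
  · have : Nonempty (Fin m) := by
      by_contra hempty
      rw [not_nonempty_iff] at hempty
      simp [Subsingleton.elim dir 0] at hpos
    refine Or.inr ⟨by simp [hzero], ?_⟩
    rw [← hsa dir, hzero]
    simpa using EuclideanSpace.inner_pos_of_apply_eq_mul_sign hb hdir (hPB dir)
end

section
/- Let g = ∇f_R(y) = P_A(y) + P_B(y) − 2P_A P_B(y). If P_A(g) = 0, then ⟨g, P_B(y)⟩ = ‖(I − P_A)P_B(y)‖₂² ≥ 0, and this inner product is zero only if P_A(y) = P_B(y) (i.e., y corresponds to a solution, in which case g = 0). -/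
open scoped RealInnerProductSpace

/-!
Since `P_A` is idempotent, `P_A g = P_A y - P_A P_B y`, so `P_A g = 0` forces
`P_A y = P_A P_B y` and hence `g = (I - P_A) P_B y`. As `P_A` is an orthogonal projection,
`(I - P_A) P_B y` is orthogonal to `P_A P_B y`, so pairing `g` with
`P_B y = (I - P_A) P_B y + P_A P_B y` gives `‖g‖²`. This vanishes only when `g = 0`, i.e.
`P_B y = P_A P_B y = P_A y`.
-/

theorem IsIdempotentElem.map_eq_map_of_map_add_sub_two_smul_eq_zero {R M : Type*} [Ring R]
    [AddCommGroup M] [Module R M] {P : M →ₗ[R] M} (hP : IsIdempotentElem P) {y b : M}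
    (h : P (P y + b - (2 : R) • P b) = 0) : P y = P b := by
  have hPP (x : M) : P (P x) = P x := LinearMap.ext_iff.mp hP x
  rw [map_sub, map_add, map_smul, hPP, hPP, two_smul] at h
  rw [← sub_eq_zero, ← h]
  abel

namespace LinearMap.IsSymmetricProjection

variable {E : Type*} [NormedAddCommGroup E] [InnerProductSpace ℝ E] {P : E →ₗ[ℝ] E}

theorem inner_sub_map_map_eq_zero (hP : P.IsSymmetricProjection) (x z : E) :
    ⟪x - P x, P z⟫ = 0 := by
  rw [← hP.isSymmetric, map_sub, ← Module.End.mul_apply, hP.isIdempotentElem.eq, sub_self,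
    inner_zero_left]

theorem inner_sub_map_self (hP : P.IsSymmetricProjection) (x : E) :
    ⟪x - P x, x⟫ = ‖x - P x‖ ^ 2 := by
  calc ⟪x - P x, x⟫ = ⟪x - P x, (x - P x) + P x⟫ := by rw [sub_add_cancel]
    _ = ‖x - P x‖ ^ 2 := by
      rw [inner_add_right, hP.inner_sub_map_map_eq_zero, add_zero, real_inner_self_eq_norm_sq]

end LinearMap.IsSymmetricProjection

/-- If `g = ∇f_R(y)` satisfies `P_A g = 0`, then `⟪g, P_B y⟫ = ‖(I−P_A)P_B y‖² ≥ 0`,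
and this inner product vanishes only if `y` is a solution (in which case `g = 0`). -/
theorem gradient_direction_good {m : ℕ}
    (PA : EuclideanSpace ℝ (Fin m) →ₗ[ℝ] EuclideanSpace ℝ (Fin m))
    (hidem : ∀ x, PA (PA x) = PA x)
    (hsa : ∀ x z, ⟪PA x, z⟫ = ⟪x, PA z⟫)
    (PB : EuclideanSpace ℝ (Fin m) → EuclideanSpace ℝ (Fin m))
    (y : EuclideanSpace ℝ (Fin m))
    (g : EuclideanSpace ℝ (Fin m))
    (hg : g = PA y + PB y - (2 : ℝ) • PA (PB y))
    (hPAg : PA g = 0) :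
    ⟪g, PB y⟫ = ‖PB y - PA (PB y)‖ ^ 2 ∧ (0 : ℝ) ≤ ⟪g, PB y⟫ ∧
    (⟪g, PB y⟫ = 0 → PA y = PB y ∧ g = 0) := by
  have hP : PA.IsSymmetricProjection := ⟨LinearMap.ext hidem, hsa⟩
  have hPAy : PA y = PA (PB y) :=
    hP.isIdempotentElem.map_eq_map_of_map_add_sub_two_smul_eq_zero (hg ▸ hPAg)
  have hg' : g = PB y - PA (PB y) := by
    rw [hg, hPAy, two_smul]
    abel
  have hinner : ⟪g, PB y⟫ = ‖g‖ ^ 2 := hg' ▸ hP.inner_sub_map_self (PB y)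
  refine ⟨hg' ▸ hinner, hinner ▸ sq_nonneg _, fun h0 => ?_⟩
  have hg0 : g = 0 := norm_eq_zero.mp (pow_eq_zero_iff two_ne_zero |>.mp (hinner ▸ h0))
  have hPB : PA (PB y) = PB y := (sub_eq_zero.mp (hg' ▸ hg0)).symm
  exact ⟨hPAy.trans hPB, hg0⟩
end
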